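/- (Averaging of the raw measurement recovers the function value.) Let Q : ℝⁿ → ℝ be continuously differentiable with ℓ-Lipschitz gradient (ℓ > 0). Then for every θ̂ ∈ ℝⁿ and every a > 0: |(1/T)·∫₀ᵀ Q(θ̂ + S(t)) dt − Q(θ̂)| ≤ (n·ℓ·a²)/2. In particular, the T-average of the raw measurement equals Q(θ̂) up to an error of order O(a²). -/

import Mathlib

/-!
By the mean value inequality, an `ℓ`-Lipschitz gradient bounds the first-order Taylor remainder
`Q(θ̂ + v) - Q(θ̂) - ⟪∇Q(θ̂), v⟫` by `ℓ‖v‖²`. Over a common period the dither has mean zero, so the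
linear term averages out, and its mean square is `n a² / 2`.
-/

open scoped RealInnerProductSpace
open Set Filter

/-- The dither (perturbation) signal `S(t) = a·(sin(ω₁t), …, sin(ωₙt))`. -/
noncomputable def dither {n : ℕ} (ω : Fin n → ℝ) (a t : ℝ) : EuclideanSpace ℝ (Fin n) :=
  WithLp.toLp 2 (fun i => a * Real.sin (ω i * t))

/-- The demodulation signal `M(t) = (2/a)·(sin(ω₁t), …, sin(ωₙt))`. -/
noncomputable def demod {n : ℕ} (ω : Fin n → ℝ) (a t : ℝ) : EuclideanSpace ℝ (Fin n) :=
  WithLp.toLp 2 (fun i => (2 / a) * Real.sin (ω i * t))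

section LipschitzGradient

variable {F : Type*} [NormedAddCommGroup F] [InnerProductSpace ℝ F] [CompleteSpace F]
  {f : F → ℝ} {ℓ : ℝ}

theorem abs_sub_sub_inner_gradient_le (hℓ : 0 ≤ ℓ) (hf : Differentiable ℝ f)
    (hlip : ∀ x y, ‖gradient f x - gradient f y‖ ≤ ℓ * ‖x - y‖) (x v : F) :
    |f (x + v) - f x - ⟪gradient f x, v⟫| ≤ ℓ * ‖v‖ ^ 2 := by
  have hfderiv : ∀ z, fderiv ℝ f z = InnerProductSpace.toDual ℝ F (gradient f z) := fun z =>
    ((InnerProductSpace.toDual ℝ F).apply_symm_apply _).symm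
  have hbound : ∀ z ∈ Metric.closedBall x ‖v‖, ‖fderiv ℝ f z - fderiv ℝ f x‖ ≤ ℓ * ‖v‖ := by
    intro z hz
    rw [hfderiv, hfderiv, ← map_sub, LinearIsometryEquiv.norm_map]
    exact (hlip z x).trans (mul_le_mul_of_nonneg_left (mem_closedBall_iff_norm.mp hz) hℓ)
  have hmvt := (convex_closedBall x ‖v‖).norm_image_sub_le_of_norm_fderiv_le'
    (fun z _ => hf z) hbound (Metric.mem_closedBall_self (norm_nonneg v))
    (show x + v ∈ Metric.closedBall x ‖v‖ by simp)
  rw [add_sub_cancel_left, hfderiv, InnerProductSpace.toDual_apply_apply] at hmvt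
  simpa [sq, mul_assoc] using hmvt

theorem abs_intervalAverage_sub_le (hℓ : 0 ≤ ℓ) (hf : Differentiable ℝ f)
    (hlip : ∀ x y, ‖gradient f x - gradient f y‖ ≤ ℓ * ‖x - y‖)
    {γ : ℝ → F} (hγ : Continuous γ) {T : ℝ} (hT : 0 < T) (hmean : ∫ t in (0 : ℝ)..T, γ t = 0)
    (x : F) :
    |(1 / T) * (∫ t in (0 : ℝ)..T, f (x + γ t)) - f x| ≤
      ℓ / T * ∫ t in (0 : ℝ)..T, ‖γ t‖ ^ 2 := by
  set r : ℝ → ℝ := fun t => f (x + γ t) - f x - ⟪gradient f x, γ t⟫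
  have hinner : Continuous fun t => ⟪gradient f x, γ t⟫ := continuous_const.inner hγ
  have hcomp : Continuous fun t => f (x + γ t) := hf.continuous.comp (continuous_const.add hγ)
  have hr : Continuous r := (hcomp.sub continuous_const).sub hinner
  have hlinear : ∫ t in (0 : ℝ)..T, ⟪gradient f x, γ t⟫ = 0 := by
    simpa [hmean] using (innerSL ℝ (gradient f x)).intervalIntegral_comp_comm
      (hγ.intervalIntegrable (μ := MeasureTheory.volume) 0 T)
  have hintegral_r : ∫ t in (0 : ℝ)..T, r t = (∫ t in (0 : ℝ)..T, f (x + γ t)) - T * f x := by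
    have hshift : Continuous fun t => f (x + γ t) - f x := hcomp.sub continuous_const
    rw [intervalIntegral.integral_sub (hshift.intervalIntegrable 0 T)
      (hinner.intervalIntegrable 0 T), hlinear, intervalIntegral.integral_sub
      (hcomp.intervalIntegrable 0 T) intervalIntegrable_const, intervalIntegral.integral_const]
    simp
  have hremainder : |∫ t in (0 : ℝ)..T, r t| ≤ ℓ * ∫ t in (0 : ℝ)..T, ‖γ t‖ ^ 2 :=
    calc |∫ t in (0 : ℝ)..T, r t| ≤ ∫ t in (0 : ℝ)..T, |r t| :=
          intervalIntegral.abs_integral_le_integral_abs hT.le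
      _ ≤ ∫ t in (0 : ℝ)..T, ℓ * ‖γ t‖ ^ 2 :=
          intervalIntegral.integral_mono_on hT.le (hr.abs.intervalIntegrable 0 T)
            ((continuous_const.mul (hγ.norm.pow 2)).intervalIntegrable 0 T)
            fun t _ => abs_sub_sub_inner_gradient_le hℓ hf hlip x (γ t)
      _ = ℓ * ∫ t in (0 : ℝ)..T, ‖γ t‖ ^ 2 := intervalIntegral.integral_const_mul ℓ _
  have havg : (1 / T) * (∫ t in (0 : ℝ)..T, f (x + γ t)) - f x =
      (1 / T) * ∫ t in (0 : ℝ)..T, r t := by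
    rw [hintegral_r]
    field_simp
  rw [havg, abs_mul, abs_of_pos (one_div_pos.mpr hT)]
  calc (1 / T) * |∫ t in (0 : ℝ)..T, r t| ≤ (1 / T) * (ℓ * ∫ t in (0 : ℝ)..T, ‖γ t‖ ^ 2) :=
        mul_le_mul_of_nonneg_left hremainder (one_div_pos.mpr hT).le
    _ = ℓ / T * ∫ t in (0 : ℝ)..T, ‖γ t‖ ^ 2 := by ring

end LipschitzGradient

theorem integral_sin_mul_eq_zero {c T : ℝ} (hc : c ≠ 0) (hcos : Real.cos (c * T) = 1) :
    ∫ t in (0 : ℝ)..T, Real.sin (c * t) = 0 := by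
  simp [intervalIntegral.integral_comp_mul_left (fun x => Real.sin x) hc, integral_sin, hcos]

theorem integral_sin_mul_sq {c T : ℝ} (hc : c ≠ 0) (hsin : Real.sin (c * T) = 0) :
    ∫ t in (0 : ℝ)..T, Real.sin (c * t) ^ 2 = T / 2 := by
  rw [intervalIntegral.integral_comp_mul_left (fun x => Real.sin x ^ 2) hc, mul_zero,
    integral_sin_sq, hsin, Real.sin_zero, smul_eq_mul]
  field_simp
  ring

section Dither

variable {n : ℕ}

theorem continuous_dither (ω : Fin n → ℝ) (a : ℝ) : Continuous (dither ω a) :=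
  (PiLp.continuous_toLp 2 _).comp <| continuous_pi fun i => by fun_prop

variable {ω : Fin n → ℝ} {T : ℝ}

theorem integral_dither_eq_zero (hω : ∀ i, ω i ≠ 0) (hper : ∀ i, Real.cos (ω i * T) = 1)
    (a : ℝ) : ∫ t in (0 : ℝ)..T, dither ω a t = 0 := by
  ext i
  have hcoord :=
    (EuclideanSpace.proj i : EuclideanSpace ℝ (Fin n) →L[ℝ] ℝ).intervalIntegral_comp_comm
      ((continuous_dither ω a).intervalIntegrable (μ := MeasureTheory.volume) 0 T)
  change EuclideanSpace.proj i (∫ t in (0 : ℝ)..T, dither ω a t) = 0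
  rw [← hcoord]
  simp [dither, intervalIntegral.integral_const_mul, integral_sin_mul_eq_zero (hω i) (hper i)]

theorem integral_norm_dither_sq (hω : ∀ i, ω i ≠ 0) (hper : ∀ i, Real.sin (ω i * T) = 0)
    (a : ℝ) : ∫ t in (0 : ℝ)..T, ‖dither ω a t‖ ^ 2 = n * a ^ 2 * T / 2 := by
  simp_rw [EuclideanSpace.real_norm_sq_eq, dither, mul_pow]
  rw [intervalIntegral.integral_finsetSum fun i _ =>
    (Continuous.intervalIntegrable (by fun_prop) 0 T)]
  simp only [intervalIntegral.integral_const_mul, integral_sin_mul_sq (hω _) (hper _),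
    Finset.sum_const, Finset.card_univ, Fintype.card_fin, nsmul_eq_mul]
  ring

end Dither

theorem stmt14_general {n : ℕ} (ω : Fin n → ℝ) (T : ℝ)
    (hω : ∀ i, 0 < ω i)
    (hT : 0 < T) (hTper : ∀ i, ∃ m : ℕ, 0 < m ∧ ω i * T = (m : ℝ) * (2 * Real.pi))
    (Q : EuclideanSpace ℝ (Fin n) → ℝ) (ℓ : ℝ) (hℓ : 0 < ℓ)
    (hQ : ContDiff ℝ 1 Q)
    (hQlip : ∀ x y, ‖gradient Q x - gradient Q y‖ ≤ ℓ * ‖x - y‖) :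
    ∀ (θhat : EuclideanSpace ℝ (Fin n)) (a : ℝ), 0 < a →
      |(1 / T) * (∫ t in (0:ℝ)..T, Q (θhat + dither ω a t)) - Q θhat| ≤
        n * ℓ * a ^ 2 / 2 := by
  intro θhat a _
  have hω0 : ∀ i, ω i ≠ 0 := fun i => (hω i).ne'
  have hcos : ∀ i, Real.cos (ω i * T) = 1 := fun i => by
    obtain ⟨m, -, hm⟩ := hTper i
    rw [hm, Real.cos_nat_mul_two_pi]
  have hsin : ∀ i, Real.sin (ω i * T) = 0 := fun i =>
    Real.sin_eq_zero_iff_cos_eq.mpr (.inl (hcos i))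
  calc |(1 / T) * (∫ t in (0:ℝ)..T, Q (θhat + dither ω a t)) - Q θhat|
      ≤ ℓ / T * ∫ t in (0 : ℝ)..T, ‖dither ω a t‖ ^ 2 :=
        abs_intervalAverage_sub_le hℓ.le (hQ.differentiable one_ne_zero) hQlip
          (continuous_dither ω a) hT (integral_dither_eq_zero hω0 hcos a) θhat
    _ = n * ℓ * a ^ 2 / 2 := by
        rw [integral_norm_dither_sq hω0 hsin a]
        field_simp

/-- averaging of the raw measurement recovers the function value:
for Q of class C¹ with ℓ-Lipschitz gradient,
`|(1/T)·∫₀ᵀ Q(θ̂+S(t)) dt − Q(θ̂)| ≤ n·ℓ·a²/2`. -/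
theorem stmt14 {n : ℕ} (hn : 1 ≤ n) (ω : Fin n → ℝ) (T : ℝ)
    (hω : ∀ i, 0 < ω i) (hωinj : Function.Injective ω)
    (hωrat : ∀ i j, ∃ q : ℚ, ω i = (q : ℝ) * ω j)
    (hT : 0 < T) (hTper : ∀ i, ∃ m : ℕ, 0 < m ∧ ω i * T = (m : ℝ) * (2 * Real.pi))
    (Q : EuclideanSpace ℝ (Fin n) → ℝ) (ℓ : ℝ) (hℓ : 0 < ℓ)
    (hQ : ContDiff ℝ 1 Q)
    (hQlip : ∀ x y, ‖gradient Q x - gradient Q y‖ ≤ ℓ * ‖x - y‖) :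
    ∀ (θhat : EuclideanSpace ℝ (Fin n)) (a : ℝ), 0 < a →
      |(1 / T) * (∫ t in (0:ℝ)..T, Q (θhat + dither ω a t)) - Q θhat| ≤
        n * ℓ * a ^ 2 / 2 :=
  stmt14_general ω T hω hT hTper Q ℓ hℓ hQ hQlip
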